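/- Let X and Y be Banach spaces, p ∈ [1, ∞), N ∈ ℕ, and let S₁¹, …, S₁^N ∈ L(X), S₂¹, …, S₂^N ∈ L(Y), and R ∈ L(X, Y). Assume the family (S₁^j) satisfies the discrete Rademacher p-bound with constant C₁ on X, and the family (S₂^j) satisfies it with constant C₂ on Y. Equip X × Y with the norm ‖(f, g)‖ = ‖f‖_X + ‖g‖_Y and define T^j : X × Y → X × Y by T^j(f, g) = (S₁^j f, S₂^j g − S₂^j R S₁^j f + R S₁^j f). Then for all (f₁, g₁), …, (f_N, g_N) ∈ X × Y: Avg_p(ε ↦ ‖Σ_j ε_j T^j(f_j, g_j)‖) ≤ (C₁ + C₂ + (1 + C₂)·C₁·‖R‖) · Avg_p(ε ↦ ‖Σ_j ε_j (f_j, g_j)‖). -/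
import Mathlib


open scoped BigOperators

/-- The sign `±1` attached to a Boolean. -/
def sgn (b : Bool) : ℝ := if b then 1 else -1

/-- The randomized `p`-average `(2^{-N} ∑_{ε ∈ {−1,1}^N} r(ε)^p)^{1/p}` of a family of
(nonnegative) reals indexed by sign vectors. -/
noncomputable def avgP (N : ℕ) (p : ℝ) (r : (Fin N → Bool) → ℝ) : ℝ :=
  ((2 : ℝ) ^ (-(N : ℝ)) * ∑ ε : Fin N → Bool, r ε ^ p) ^ (1 / p)

/-- A finite family of bounded operators satisfies the discrete Rademacher `p`-bound with
constant `C` (discrete formulation of `R`-boundedness). -/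
def RadBound {Z : Type*} [NormedAddCommGroup Z] [NormedSpace ℝ Z]
    (N : ℕ) (p C : ℝ) (T : Fin N → Z →L[ℝ] Z) : Prop :=
  ∀ z : Fin N → Z,
    avgP N p (fun ε => ‖∑ j, sgn (ε j) • T j (z j)‖) ≤
      C * avgP N p (fun ε => ‖∑ j, sgn (ε j) • z j‖)

section auxAvgP

variable {N : ℕ} {p : ℝ}

lemma sum_rpow_nonneg {N : ℕ} (p : ℝ) {r : (Fin N → Bool) → ℝ} (hr : ∀ ε, 0 ≤ r ε) :
    0 ≤ ∑ ε : Fin N → Bool, r ε ^ p :=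
  Finset.sum_nonneg fun ε _ => Real.rpow_nonneg (hr ε) p

lemma avgP_nonneg (N : ℕ) (p : ℝ) {r : (Fin N → Bool) → ℝ} (hr : ∀ ε, 0 ≤ r ε) :
    0 ≤ avgP N p r := by
  unfold avgP
  have h := sum_rpow_nonneg p hr
  positivity

lemma avgP_mono (hp : 0 < p) {r s : (Fin N → Bool) → ℝ}
    (hr : ∀ ε, 0 ≤ r ε) (h : ∀ ε, r ε ≤ s ε) : avgP N p r ≤ avgP N p s := by
  unfold avgP
  have h0 := sum_rpow_nonneg p hr
  apply Real.rpow_le_rpow (by positivity)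
  · apply mul_le_mul_of_nonneg_left _ (by positivity)
    exact Finset.sum_le_sum fun ε _ => Real.rpow_le_rpow (hr ε) (h ε) hp.le
  · positivity

lemma avgP_smul (hp : 0 < p) (c : ℝ) (hc : 0 ≤ c) (r : (Fin N → Bool) → ℝ)
    (hr : ∀ ε, 0 ≤ r ε) : avgP N p (fun ε => c * r ε) = c * avgP N p r := by
  unfold avgP
  have h1 : ∀ ε : Fin N → Bool, (c * r ε) ^ p = c ^ p * r ε ^ p := fun ε =>
    Real.mul_rpow hc (hr ε)
  have h0 := sum_rpow_nonneg p hr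
  simp only [h1, ← Finset.mul_sum]
  rw [show (2 : ℝ) ^ (-(N : ℝ)) * (c ^ p * ∑ ε : Fin N → Bool, r ε ^ p) =
      c ^ p * ((2 : ℝ) ^ (-(N : ℝ)) * ∑ ε : Fin N → Bool, r ε ^ p) by ring,
    Real.mul_rpow (by positivity) (by positivity),
    ← Real.rpow_mul hc, mul_one_div, div_self hp.ne', Real.rpow_one]

lemma avgP_add_le (hp : 1 ≤ p) (r s : (Fin N → Bool) → ℝ)
    (hr : ∀ ε, 0 ≤ r ε) (hs : ∀ ε, 0 ≤ s ε) :
    avgP N p (fun ε => r ε + s ε) ≤ avgP N p r + avgP N p s := by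
  have hp0 : 0 < p := lt_of_lt_of_le one_pos hp
  unfold avgP
  have key : ∀ t : (Fin N → Bool) → ℝ, (∀ ε, 0 ≤ t ε) →
      ((2 : ℝ) ^ (-(N : ℝ)) * ∑ ε : Fin N → Bool, t ε ^ p) ^ (1 / p) =
        ((2 : ℝ) ^ (-(N : ℝ))) ^ (1 / p) * (∑ ε : Fin N → Bool, t ε ^ p) ^ (1 / p) := by
    intro t ht
    have h0 := sum_rpow_nonneg p ht
    rw [Real.mul_rpow (by positivity) (by positivity)]
  rw [key _ (fun ε => add_nonneg (hr ε) (hs ε)), key r hr, key s hs, ← mul_add]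
  apply mul_le_mul_of_nonneg_left _ (by positivity)
  exact Real.Lp_add_le_of_nonneg (s := Finset.univ) hp (fun ε _ => hr ε) (fun ε _ => hs ε)

lemma avgP_le_mul_of_le (hp : 0 < p) {r s : (Fin N → Bool) → ℝ} {c : ℝ} (hc : 0 ≤ c)
    (hr : ∀ ε, 0 ≤ r ε) (hs : ∀ ε, 0 ≤ s ε) (h : ∀ ε, r ε ≤ c * s ε) :
    avgP N p r ≤ c * avgP N p s := by
  calc avgP N p r ≤ avgP N p (fun ε => c * s ε) :=
        avgP_mono hp hr h
    _ = c * avgP N p s := avgP_smul hp c hc s hs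

end auxAvgP

/-- Discrete Rademacher bound for the coupled (triangular) operator family
`T^j(f,g) = (S₁^j f, S₂^j g − S₂^j R S₁^j f + R S₁^j f)` on `X × Y` equipped with the sum
norm `‖(f,g)‖ = ‖f‖_X + ‖g‖_Y`: if `(S₁^j)` has Rademacher `p`-bound `C₁` and `(S₂^j)`
has Rademacher `p`-bound `C₂`, the coupled family has bound `C₁ + C₂ + (1 + C₂) C₁ ‖R‖`. -/
theorem coupled_radBound
    {X Y : Type*} [NormedAddCommGroup X] [NormedSpace ℝ X] [CompleteSpace X]
    [NormedAddCommGroup Y] [NormedSpace ℝ Y] [CompleteSpace Y]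
    (p : ℝ) (hp : 1 ≤ p) (N : ℕ)
    (S₁ : Fin N → X →L[ℝ] X) (S₂ : Fin N → Y →L[ℝ] Y) (R : X →L[ℝ] Y)
    (C₁ C₂ : ℝ) (hC₁ : 0 ≤ C₁) (hC₂ : 0 ≤ C₂)
    (hS₁ : RadBound N p C₁ S₁) (hS₂ : RadBound N p C₂ S₂) :
    ∀ (f : Fin N → X) (g : Fin N → Y),
      avgP N p (fun ε =>
          ‖∑ j, sgn (ε j) • S₁ j (f j)‖ +
          ‖∑ j, sgn (ε j) •
            (S₂ j (g j) - S₂ j (R (S₁ j (f j))) + R (S₁ j (f j)))‖) ≤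
        (C₁ + C₂ + (1 + C₂) * C₁ * ‖R‖) *
          avgP N p (fun ε => ‖∑ j, sgn (ε j) • f j‖ + ‖∑ j, sgn (ε j) • g j‖) := by
  intro f g
  have hp0 : 0 < p := lt_of_lt_of_le one_pos hp
  set u1 : (Fin N → Bool) → ℝ := fun ε => ‖∑ j, sgn (ε j) • S₁ j (f j)‖ with hu1
  set u2 : (Fin N → Bool) → ℝ := fun ε => ‖∑ j, sgn (ε j) • S₂ j (g j)‖ with hu2
  set u3 : (Fin N → Bool) → ℝ := fun ε => ‖∑ j, sgn (ε j) • S₂ j (R (S₁ j (f j)))‖ with hu3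
  set u4 : (Fin N → Bool) → ℝ := fun ε => ‖∑ j, sgn (ε j) • R (S₁ j (f j))‖ with hu4
  set FG : (Fin N → Bool) → ℝ :=
    fun ε => ‖∑ j, sgn (ε j) • f j‖ + ‖∑ j, sgn (ε j) • g j‖ with hFG
  have hFGnn : ∀ ε, 0 ≤ FG ε := fun ε => add_nonneg (norm_nonneg _) (norm_nonneg _)
  have hMnn : 0 ≤ avgP N p FG := avgP_nonneg N p hFGnn
  -- pointwise splitting of the second norm
  have hsplit : ∀ ε : Fin N → Bool,
      ‖∑ j, sgn (ε j) • (S₂ j (g j) - S₂ j (R (S₁ j (f j))) + R (S₁ j (f j)))‖ ≤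
        u2 ε + u3 ε + u4 ε := by
    intro ε
    have h1 : (∑ j, sgn (ε j) • (S₂ j (g j) - S₂ j (R (S₁ j (f j))) + R (S₁ j (f j)))) =
        (∑ j, sgn (ε j) • S₂ j (g j)) - (∑ j, sgn (ε j) • S₂ j (R (S₁ j (f j)))) +
          (∑ j, sgn (ε j) • R (S₁ j (f j))) := by
      rw [← Finset.sum_sub_distrib, ← Finset.sum_add_distrib]
      congr 1; ext j
      simp [smul_sub, smul_add]
    rw [h1]
    calc ‖_ - _ + _‖ ≤ ‖(∑ j, sgn (ε j) • S₂ j (g j)) -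
            (∑ j, sgn (ε j) • S₂ j (R (S₁ j (f j))))‖ +
          ‖∑ j, sgn (ε j) • R (S₁ j (f j))‖ := norm_add_le _ _
      _ ≤ u2 ε + u3 ε + u4 ε := by
          have := norm_sub_le (∑ j, sgn (ε j) • S₂ j (g j))
            (∑ j, sgn (ε j) • S₂ j (R (S₁ j (f j))))
          simp only [hu2, hu3, hu4]
          linarith
  -- bounds on the four pieces
  have b1 : avgP N p u1 ≤ C₁ * avgP N p FG := by
    calc avgP N p u1 ≤ C₁ * avgP N p (fun ε => ‖∑ j, sgn (ε j) • f j‖) := hS₁ f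
      _ ≤ C₁ * avgP N p FG := by
          apply mul_le_mul_of_nonneg_left _ hC₁
          exact avgP_mono hp0 (fun ε => norm_nonneg _)
            (fun ε => le_add_of_nonneg_right (norm_nonneg _))
  have b2 : avgP N p u2 ≤ C₂ * avgP N p FG := by
    calc avgP N p u2 ≤ C₂ * avgP N p (fun ε => ‖∑ j, sgn (ε j) • g j‖) := hS₂ g
      _ ≤ C₂ * avgP N p FG := by
          apply mul_le_mul_of_nonneg_left _ hC₂
          exact avgP_mono hp0 (fun ε => norm_nonneg _)
            (fun ε => le_add_of_nonneg_left (norm_nonneg _))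
  have b4u1 : avgP N p u4 ≤ ‖R‖ * avgP N p u1 := by
    apply avgP_le_mul_of_le hp0 (norm_nonneg R) (fun ε => norm_nonneg _)
      (fun ε => norm_nonneg _)
    intro ε
    have : (∑ j, sgn (ε j) • R (S₁ j (f j))) = R (∑ j, sgn (ε j) • S₁ j (f j)) := by
      rw [map_sum]
      congr 1; ext j; rw [map_smul]
    simp only [hu4, hu1, this]
    exact R.le_opNorm _
  have b4 : avgP N p u4 ≤ ‖R‖ * (C₁ * avgP N p FG) :=
    b4u1.trans (mul_le_mul_of_nonneg_left b1 (norm_nonneg R))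
  have b3 : avgP N p u3 ≤ C₂ * (‖R‖ * (C₁ * avgP N p FG)) := by
    have := hS₂ (fun j => R (S₁ j (f j)))
    exact this.trans (mul_le_mul_of_nonneg_left b4 hC₂)
  -- put everything together
  have main : avgP N p (fun ε =>
      ‖∑ j, sgn (ε j) • S₁ j (f j)‖ +
      ‖∑ j, sgn (ε j) • (S₂ j (g j) - S₂ j (R (S₁ j (f j))) + R (S₁ j (f j)))‖) ≤
      avgP N p u1 + (avgP N p u2 + (avgP N p u3 + avgP N p u4)) := by
    calc avgP N p (fun ε =>
          ‖∑ j, sgn (ε j) • S₁ j (f j)‖ +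
          ‖∑ j, sgn (ε j) • (S₂ j (g j) - S₂ j (R (S₁ j (f j))) + R (S₁ j (f j)))‖) ≤
        avgP N p (fun ε => u1 ε + (u2 ε + (u3 ε + u4 ε))) := by
          apply avgP_mono hp0
            (fun ε => add_nonneg (norm_nonneg _) (norm_nonneg _))
          intro ε
          have := hsplit ε
          simp only [hu1]
          linarith
      _ ≤ avgP N p u1 + avgP N p (fun ε => u2 ε + (u3 ε + u4 ε)) :=
          avgP_add_le hp _ _ (fun ε => norm_nonneg _)
            (fun ε => add_nonneg (norm_nonneg _) (add_nonneg (norm_nonneg _) (norm_nonneg _)))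
      _ ≤ avgP N p u1 + (avgP N p u2 + avgP N p (fun ε => u3 ε + u4 ε)) := by
          have := avgP_add_le hp u2 (fun ε => u3 ε + u4 ε) (fun ε => norm_nonneg _)
            (fun ε => add_nonneg (norm_nonneg _) (norm_nonneg _))
          linarith
      _ ≤ avgP N p u1 + (avgP N p u2 + (avgP N p u3 + avgP N p u4)) := by
          have := avgP_add_le hp u3 u4 (fun ε => norm_nonneg _) (fun ε => norm_nonneg _)
          linarith
  calc avgP N p (fun ε =>
        ‖∑ j, sgn (ε j) • S₁ j (f j)‖ +
        ‖∑ j, sgn (ε j) • (S₂ j (g j) - S₂ j (R (S₁ j (f j))) + R (S₁ j (f j)))‖) ≤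
      avgP N p u1 + (avgP N p u2 + (avgP N p u3 + avgP N p u4)) := main
    _ ≤ C₁ * avgP N p FG + (C₂ * avgP N p FG +
        (C₂ * (‖R‖ * (C₁ * avgP N p FG)) + ‖R‖ * (C₁ * avgP N p FG))) := by
        linarith
    _ = (C₁ + C₂ + (1 + C₂) * C₁ * ‖R‖) * avgP N p FG := by ring
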